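/- Let Y be a real normed space and f: ℓ¹(Γ) → Y a surjective phase-isometry. Fix γ₀ ∈ Γ and t ∈ ℝ. If x ∈ ℓ¹(Γ) satisfies f(x) = t·f(e_{γ₀}), then x = t·e_{γ₀} or x = −t·e_{γ₀}. -/

import Mathlib

/-!
A phase-isometry preserves norms and the sum `‖x + y‖ + ‖x - y‖`. With `e = e_γ₀` this gives
`‖x‖ = |t|`. If `|t| ≤ 1`, then `‖x + e‖ + ‖x - e‖ = |t + 1| + |t - 1| = 2`, which in `ℓ¹` forces
`|x γ₀| ≥ ‖x‖`, so `x` is supported at `γ₀`. If `|t| ≥ 1`, then for `γ ≠ γ₀` the vectors `f e` and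
`f e_γ` are at distance `2` in both phases, so `‖t • f e ± f e_γ‖ = |t| + 1`, hence
`‖x ± e_γ‖ = ‖x‖ + 1`, which forces `x γ = 0`.
-/

theorem Set.eq_and_eq_of_pair_eq_pair_self {α : Type*} {a b c : α}
    (h : ({a, b} : Set α) = {c, c}) : a = c ∧ b = c := by
  rcases Set.pair_eq_pair_iff.mp h with h | h <;> exact h

theorem norm_smul_add_of_norm_add_eq {E : Type*} [SeminormedAddCommGroup E] [NormedSpace ℝ E]
    {u v : E} (h : ‖u + v‖ = ‖u‖ + ‖v‖) {a : ℝ} (ha : 1 ≤ a) :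
    ‖a • u + v‖ = a * ‖u‖ + ‖v‖ := by
  have ha₀ : 0 ≤ a := zero_le_one.trans ha
  apply le_antisymm
  · calc ‖a • u + v‖ ≤ ‖a • u‖ + ‖v‖ := norm_add_le _ _
      _ = a * ‖u‖ + ‖v‖ := by rw [norm_smul, Real.norm_of_nonneg ha₀]
  · have hsplit : a • (u + v) = (a • u + v) + (a - 1) • v := by module
    have hle : a * (‖u‖ + ‖v‖) ≤ ‖a • u + v‖ + (a - 1) * ‖v‖ := by
      calc a * (‖u‖ + ‖v‖) = ‖a • (u + v)‖ := by rw [norm_smul, Real.norm_of_nonneg ha₀, h]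
        _ ≤ ‖a • u + v‖ + ‖(a - 1) • v‖ := hsplit ▸ norm_add_le _ _
        _ = ‖a • u + v‖ + (a - 1) * ‖v‖ := by
          rw [norm_smul, Real.norm_of_nonneg (sub_nonneg.mpr ha)]
    linarith

theorem norm_smul_add_of_norm_add_eq_of_norm_sub_eq {E : Type*} [SeminormedAddCommGroup E]
    [NormedSpace ℝ E] {u v : E} (hadd : ‖u + v‖ = ‖u‖ + ‖v‖) (hsub : ‖u - v‖ = ‖u‖ + ‖v‖)
    {t : ℝ} (ht : 1 ≤ |t|) : ‖t • u + v‖ = |t| * ‖u‖ + ‖v‖ := by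
  rcases le_or_gt 0 t with ht₀ | ht₀
  · rw [abs_of_nonneg ht₀] at ht ⊢
    exact norm_smul_add_of_norm_add_eq hadd ht
  · rw [abs_of_neg ht₀] at ht ⊢
    have hsub' : ‖u + -v‖ = ‖u‖ + ‖-v‖ := by rwa [← sub_eq_add_neg, norm_neg]
    rw [← norm_neg, neg_add, ← neg_smul, norm_smul_add_of_norm_add_eq hsub' ht, norm_neg]

namespace lp

variable {Γ : Type*} [DecidableEq Γ] {E : Γ → Type*} [∀ i, NormedAddCommGroup (E i)]

theorem norm_add_single (x : lp E 1) (i : Γ) (c : E i) :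
    ‖x + lp.single 1 i c‖ = ‖x‖ + ‖x i + c‖ - ‖x i‖ := by
  have hp : (0 : ℝ) < (1 : ENNReal).toReal := by norm_num
  have hx : HasSum (fun j => ‖x j‖) ‖x‖ := by simpa using hasSum_norm hp x
  have hxc := hasSum_norm hp (x + lp.single 1 i c)
  have hcoord : (fun j => ‖(x + lp.single 1 i c) j‖) =
      Function.update (fun j => ‖x j‖) i ‖x i + c‖ := by
    funext j
    rcases eq_or_ne j i with rfl | hj
    · simp
    · simp [hj]
  simp only [ENNReal.toReal_one, Real.rpow_one, hcoord] at hxc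
  rw [hxc.unique (hx.update i _)]
  ring

theorem norm_sub_single (x : lp E 1) (i : Γ) (c : E i) :
    ‖x - lp.single 1 i c‖ = ‖x‖ + ‖x i - c‖ - ‖x i‖ := by
  rw [sub_eq_add_neg x, ← lp.single_neg, norm_add_single, ← sub_eq_add_neg]

theorem norm_sub_single_apply (x : lp E 1) (i : Γ) :
    ‖x - lp.single 1 i (x i)‖ = ‖x‖ - ‖x i‖ := by
  simp [norm_sub_single]

theorem eq_single_of_norm_le {x : lp E 1} {i : Γ} (h : ‖x‖ ≤ ‖x i‖) :
    x = lp.single 1 i (x i) := by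
  have := norm_sub_single_apply x i
  rw [← sub_eq_zero, ← norm_le_zero_iff]
  linarith

theorem eq_single_of_apply_eq_zero {p : ENNReal} {x : lp E p} {i : Γ} (h : ∀ j ≠ i, x j = 0) :
    x = lp.single p i (x i) := by
  ext j
  rcases eq_or_ne j i with rfl | hj
  · simp
  · simp [hj, h j hj]

theorem norm_single_add_single_of_ne {i j : Γ} (hij : j ≠ i) (a : E i) (b : E j) :
    ‖lp.single 1 i a + lp.single 1 j b‖ = ‖a‖ + ‖b‖ := by
  simp [norm_add_single, Pi.single_eq_of_ne hij]

theorem two_sub_two_mul_abs_apply_le (x : lp (fun _ : Γ => ℝ) 1) (i : Γ) :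
    2 * ‖x‖ + 2 - 2 * |x i| ≤ ‖x + lp.single 1 i 1‖ + ‖x - lp.single 1 i 1‖ := by
  rw [norm_add_single, norm_sub_single]
  simp only [Real.norm_eq_abs]
  linarith [le_abs_self (x i + 1), neg_le_abs (x i - 1)]

theorem apply_eq_zero_of_norm_add_single_eq_of_norm_sub_single_eq (x : lp (fun _ : Γ => ℝ) 1)
    (i : Γ) (hadd : ‖x + lp.single 1 i 1‖ = ‖x‖ + 1) (hsub : ‖x - lp.single 1 i 1‖ = ‖x‖ + 1) :
    x i = 0 := by
  rw [norm_add_single] at hadd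
  rw [norm_sub_single] at hsub
  simp only [Real.norm_eq_abs] at hadd hsub
  rcases abs_cases (x i) with ⟨h1, h2⟩ | ⟨h1, h2⟩ <;>
    rcases abs_cases (x i + 1) with ⟨h3, h4⟩ | ⟨h3, h4⟩ <;>
      rcases abs_cases (x i - 1) with ⟨h5, h6⟩ | ⟨h5, h6⟩ <;> linarith

end lp

def IsPhaseIsometry {X Y : Type*} [SeminormedAddCommGroup X] [SeminormedAddCommGroup Y]
    (f : X → Y) : Prop :=
  ∀ x y, ({‖f x + f y‖, ‖f x - f y‖} : Set ℝ) = {‖x + y‖, ‖x - y‖}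

namespace IsPhaseIsometry

section

variable {X Y : Type*} [SeminormedAddCommGroup X] [SeminormedAddCommGroup Y] {f : X → Y}

theorem norm_add_add_norm_sub (hf : IsPhaseIsometry f) (x y : X) :
    ‖f x + f y‖ + ‖f x - f y‖ = ‖x + y‖ + ‖x - y‖ := by
  rcases Set.pair_eq_pair_iff.mp (hf x y) with ⟨h₁, h₂⟩ | ⟨h₁, h₂⟩ <;> rw [h₁, h₂]
  exact add_comm _ _

theorem norm_add_and_norm_sub_eq_iff (hf : IsPhaseIsometry f) (x y : X) (c : ℝ) :
    ‖f x + f y‖ = c ∧ ‖f x - f y‖ = c ↔ ‖x + y‖ = c ∧ ‖x - y‖ = c := by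
  have h := hf x y
  constructor
  · rintro ⟨h₁, h₂⟩
    rw [h₁, h₂] at h
    exact Set.eq_and_eq_of_pair_eq_pair_self h.symm
  · rintro ⟨h₁, h₂⟩
    rw [h₁, h₂] at h
    exact Set.eq_and_eq_of_pair_eq_pair_self h

theorem norm_map [NormedSpace ℝ X] [NormedSpace ℝ Y] (hf : IsPhaseIsometry f) (x : X) :
    ‖f x‖ = ‖x‖ := by
  have := hf.norm_add_add_norm_sub x x
  rw [← two_smul ℝ, ← two_smul ℝ, norm_smul, norm_smul, sub_self, sub_self] at this
  norm_num at this
  exact this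

theorem norm_eq_of_map_eq_smul [NormedSpace ℝ X] [NormedSpace ℝ Y] (hf : IsPhaseIsometry f)
    {x e : X} {t : ℝ} (hx : f x = t • f e) : ‖x‖ = |t| * ‖e‖ := by
  rw [← hf.norm_map, hx, norm_smul, hf.norm_map, Real.norm_eq_abs]

end

section

variable {Γ : Type*} [DecidableEq Γ] {Y : Type*} [NormedAddCommGroup Y] [NormedSpace ℝ Y]
  {f : lp (fun _ : Γ => ℝ) 1 → Y} {i : Γ} {t : ℝ} {x : lp (fun _ : Γ => ℝ) 1}

theorem eq_single_of_map_eq_smul_of_abs_le_one (hf : IsPhaseIsometry f)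
    (hx : f x = t • f (lp.single 1 i 1)) (ht : |t| ≤ 1) : x = lp.single 1 i (x i) := by
  set e : lp (fun _ : Γ => ℝ) 1 := lp.single 1 i 1
  have he : ‖f e‖ = 1 := by simp [e, hf.norm_map]
  have hxt : ‖x‖ = |t| := by simpa [e] using hf.norm_eq_of_map_eq_smul hx
  have hsum : ‖x + e‖ + ‖x - e‖ = 2 := by
    have hadd : t • f e + f e = (t + 1) • f e := by module
    have hsub : t • f e - f e = (t - 1) • f e := by module
    rw [← hf.norm_add_add_norm_sub, hx, hadd, hsub, norm_smul, norm_smul, he, Real.norm_eq_abs,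
      Real.norm_eq_abs]
    rcases abs_le.mp ht with ⟨h₁, h₂⟩
    rw [abs_of_nonneg (by linarith), abs_of_nonpos (by linarith)]
    ring
  refine lp.eq_single_of_norm_le ?_
  linarith [lp.two_sub_two_mul_abs_apply_le x i, Real.norm_eq_abs (x i)]

theorem eq_single_of_map_eq_smul_of_one_le_abs (hf : IsPhaseIsometry f)
    (hx : f x = t • f (lp.single 1 i 1)) (ht : 1 ≤ |t|) : x = lp.single 1 i (x i) := by
  set e : lp (fun _ : Γ => ℝ) 1 := lp.single 1 i 1
  have hxt : ‖x‖ = |t| := by simpa [e] using hf.norm_eq_of_map_eq_smul hx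
  refine lp.eq_single_of_apply_eq_zero fun j hj => ?_
  set e' : lp (fun _ : Γ => ℝ) 1 := lp.single 1 j 1
  have he : ‖f e‖ = 1 := by simp [e, hf.norm_map]
  have he' : ‖f e'‖ = 1 := by simp [e', hf.norm_map]
  obtain ⟨hadd, hsub⟩ : ‖f e + f e'‖ = 2 ∧ ‖f e - f e'‖ = 2 := by
    rw [hf.norm_add_and_norm_sub_eq_iff, sub_eq_add_neg, ← lp.single_neg,
      lp.norm_single_add_single_of_ne hj, lp.norm_single_add_single_of_ne hj]
    norm_num
  have hadd' : ‖f e + f e'‖ = ‖f e‖ + ‖f e'‖ := by rw [hadd, he, he']; norm_num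
  have hsub' : ‖f e - f e'‖ = ‖f e‖ + ‖f e'‖ := by rw [hsub, he, he']; norm_num
  obtain ⟨hxadd, hxsub⟩ : ‖x + e'‖ = ‖x‖ + 1 ∧ ‖x - e'‖ = ‖x‖ + 1 := by
    rw [← hf.norm_add_and_norm_sub_eq_iff, hx, hxt, sub_eq_add_neg,
      norm_smul_add_of_norm_add_eq_of_norm_sub_eq hadd' hsub' ht,
      norm_smul_add_of_norm_add_eq_of_norm_sub_eq (v := -f e') (by rwa [norm_neg, ← sub_eq_add_neg])
        (by rwa [norm_neg, sub_neg_eq_add]) ht, norm_neg, he, he']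
    simp
  exact lp.apply_eq_zero_of_norm_add_single_eq_of_norm_sub_single_eq x j hxadd hxsub

end

end IsPhaseIsometry

theorem stmt_13_general {Γ : Type*} [DecidableEq Γ] {Y : Type*} [NormedAddCommGroup Y]
    [NormedSpace ℝ Y] (f : lp (fun _ : Γ => ℝ) 1 → Y)
    (hf : ∀ x y : lp (fun _ : Γ => ℝ) 1,
      ({‖f x + f y‖, ‖f x - f y‖} : Set ℝ) = {‖x + y‖, ‖x - y‖})
    (γ₀ : Γ) (t : ℝ) (x : lp (fun _ : Γ => ℝ) 1)
    (hx : f x = t • f (lp.single 1 γ₀ (1 : ℝ))) :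
    x = t • lp.single 1 γ₀ (1 : ℝ) ∨ x = -(t • lp.single 1 γ₀ (1 : ℝ)) := by
  have hf : IsPhaseIsometry f := hf
  have hsingle : x = lp.single 1 γ₀ (x γ₀) := by
    rcases le_total |t| 1 with ht | ht
    · exact hf.eq_single_of_map_eq_smul_of_abs_le_one hx ht
    · exact hf.eq_single_of_map_eq_smul_of_one_le_abs hx ht
  have hxt : |x γ₀| = |t| := by
    have h := hf.norm_eq_of_map_eq_smul hx
    rw [hsingle] at h
    simpa using h
  rw [← lp.single_smul, ← lp.single_neg, smul_eq_mul, mul_one]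
  rcases abs_eq_abs.mp hxt with h | h
  · exact .inl (hsingle.trans (congrArg _ h))
  · exact .inr (hsingle.trans (congrArg _ h))

theorem stmt_13 {Γ : Type*} [DecidableEq Γ] {Y : Type*} [NormedAddCommGroup Y]
    [NormedSpace ℝ Y] (f : lp (fun _ : Γ => ℝ) 1 → Y)
    (hf : ∀ x y : lp (fun _ : Γ => ℝ) 1,
      ({‖f x + f y‖, ‖f x - f y‖} : Set ℝ) = {‖x + y‖, ‖x - y‖})
    (hsurj : Function.Surjective f)
    (γ₀ : Γ) (t : ℝ) (x : lp (fun _ : Γ => ℝ) 1)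
    (hx : f x = t • f (lp.single 1 γ₀ (1 : ℝ))) :
    x = t • lp.single 1 γ₀ (1 : ℝ) ∨ x = -(t • lp.single 1 γ₀ (1 : ℝ)) :=
  stmt_13_general f hf γ₀ t x hx
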